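/- arXiv:1601.00502 — 2 statements merged into one kernel-verified Lean document; each statement's English description precedes it below -/
import Mathlib

section
/- For every natural number k one has F(k + M) − F(k) = 2·D·(g − 1). (This is the computational content of Corollary 5.5 of the paper: by the Chevalley–Weil formula, for a faithful action of a finite group G of order M on a curve of genus g, the multiplicity of any irreducible representation ρ of dimension D in H⁰(ω_C^{k+|G|}) exceeds its multiplicity in H⁰(ω_C^{k}) by exactly 2·(dim ρ)·(g−1), independently of the action; hence the representation-type decompositions 𝒟^G_{k,g} and 𝒟^G_{k+|G|,g} of the moduli space coincide.) -/
/-! The term `2kD(g−1)/M` grows by exactly `2D(g−1)` when `k` increases by `M`, while every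
residue `[−α−k]_{mᵢ}` is unchanged because `mᵢ ∣ M`. -/

theorem Int.sub_add_emod_of_dvd {m M : ℤ} (h : m ∣ M) (a k : ℤ) :
    (a - (k + M)) % m = (a - k) % m := by
  obtain ⟨c, rfl⟩ := h
  rw [show a - (k + m * c) = a - k + m * (-c) by ring, Int.add_mul_emod_self_left]

theorem branch_sum_add_of_dvd {ι : Type*} [Fintype ι] (M : ℕ) (m : ι → ℕ) (hdvd : ∀ i, m i ∣ M)
    (c : ι → ℕ → ℚ) (k : ℕ) :
    ∑ i, ∑ α ∈ Finset.range (m i),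
        c i α * ((((-(α : ℤ) - ((k + M : ℕ) : ℤ)) % (m i : ℤ)) : ℤ) : ℚ) / (m i : ℚ)
      = ∑ i, ∑ α ∈ Finset.range (m i),
        c i α * ((((-(α : ℤ) - (k : ℤ)) % (m i : ℤ)) : ℤ) : ℚ) / (m i : ℚ) := by
  push_cast
  simp only [Int.sub_add_emod_of_dvd (Int.natCast_dvd_natCast.mpr (hdvd _))]

theorem chevalleyWeil_periodicity_general
    (M : ℕ) (hM : 1 ≤ M)
    (g g' : ℤ) (D : ℕ) (r : ℕ)
    (m : Fin r → ℕ) (hdvd : ∀ i, m i ∣ M)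
    (N : Fin r → ℕ → ℕ)
    (F : ℕ → ℚ)
    (hF : ∀ k : ℕ, F k =
      (2 * (k : ℚ) / (M : ℚ)) * (D : ℚ) * ((g : ℚ) - 1)
        - (D : ℚ) * ((g' : ℚ) - 1)
        - ∑ i : Fin r, ∑ α ∈ Finset.range (m i),
            (N i α : ℚ) * ((((-(α : ℤ) - (k : ℤ)) % (m i : ℤ)) : ℤ) : ℚ) / (m i : ℚ)) :
    ∀ k : ℕ, F (k + M) - F k = 2 * (D : ℚ) * ((g : ℚ) - 1) := by
  intro k
  rw [hF, hF, branch_sum_add_of_dvd M m hdvd (fun i α => (N i α : ℚ)) k]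
  have hM' : (M : ℚ) ≠ 0 := Nat.cast_ne_zero.mpr (by omega)
  push_cast
  field_simp
  ring

/-- (Corollary 5.5, k ≥ 2 part, of "G-marked moduli spaces".)
For the Chevalley–Weil value
`F k = (2k/M)·D·(g−1) − D·(g'−1) − Σᵢ Σ_{α<mᵢ} N i α · [−α−k]_{mᵢ} / mᵢ`,
where `M ≥ 1` and each `mᵢ` is a positive divisor of `M`, one has
`F (k + M) − F k = 2·D·(g−1)` for every natural number `k`. -/
theorem chevalleyWeil_periodicity
    (M : ℕ) (hM : 1 ≤ M)
    (g g' : ℤ) (D : ℕ) (r : ℕ)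
    (m : Fin r → ℕ) (hm : ∀ i, 0 < m i) (hdvd : ∀ i, m i ∣ M)
    (N : Fin r → ℕ → ℕ)
    (F : ℕ → ℚ)
    (hF : ∀ k : ℕ, F k =
      (2 * (k : ℚ) / (M : ℚ)) * (D : ℚ) * ((g : ℚ) - 1)
        - (D : ℚ) * ((g' : ℚ) - 1)
        - ∑ i : Fin r, ∑ α ∈ Finset.range (m i),
            (N i α : ℚ) * ((((-(α : ℤ) - (k : ℤ)) % (m i : ℤ)) : ℤ) : ℚ) / (m i : ℚ)) :
    ∀ k : ℕ, F (k + M) - F k = 2 * (D : ℚ) * ((g : ℚ) - 1) :=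
  chevalleyWeil_periodicity_general M hM g g' D r m hdvd N F hF
end

section
/- Assume in addition that Σ_{α=0}^{m_i−1} N_{i,α} = D for each i = 1, …, r, that the Riemann–Hurwitz relation 2(g−1)/M = 2(g'−1) + Σ_{i=1}^{r} (1 − 1/m_i) holds in ℚ, and let σ ∈ {0,1}. Define F₁ = D·(g'−1) + Σ_{i=1}^{r} Σ_{α=1}^{m_i−1} α·N_{i,α}/m_i + σ ∈ ℚ. Then F(1 + M) − F₁ = 2·D·(g−1) − σ. (This is the k = 1 part of Corollary 5.5 of the paper: F₁ is the value ⟨χ_{φ_1}, χ_ρ⟩ given by the degree-one Chevalley–Weil formula, where σ = 1 if ρ is trivial and σ = 0 otherwise, and F(1+M) is the multiplicity ⟨χ_{φ_{1+|G|}}, χ_ρ⟩; their difference 2·(dim ρ)·(g−1) − σ is independent of the action.) -/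
/-!
Since every branch index `m` divides `M`, raising the degree from `1` to `1 + M` does not change
the residues: `[-α - 1 - M]_m = m - 1 - α` for `α < m`. Hence the eigenvalue-`α` contributions of
`F (1 + M)` and of `F₁` add up to `N_{i,α} (1 - 1/m_i)`, and summing over `α` and `i` leaves
`D · Σᵢ (1 - 1/mᵢ)`, which the Riemann–Hurwitz relation rewrites in terms of `g` and `g'`.
-/

theorem Int.emod_neg_sub_one_add_of_dvd {m M α : ℤ} (hα₀ : 0 ≤ α) (hαm : α < m) (hdvd : m ∣ M) :
    (-α - (1 + M)) % m = m - 1 - α := by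
  obtain ⟨t, rfl⟩ := hdvd
  have hshift : -α - (1 + m * t) = (m - 1 - α) + m * (-1 - t) := by ring
  rw [hshift, Int.add_mul_emod_self_left, Int.emod_eq_of_lt (by omega) (by omega)]

theorem Finset.sum_Ico_one_eq_sum_range {M : Type*} [AddCommMonoid M] {f : ℕ → M} (hf : f 0 = 0)
    (n : ℕ) : ∑ α ∈ Ico 1 n, f α = ∑ α ∈ range n, f α := by
  rcases Nat.eq_zero_or_pos n with rfl | hn
  · simp
  · rw [sum_range_eq_add_Ico f hn, hf, zero_add]

theorem sum_residue_add_sum_weighted_eq {m M : ℕ} (hm : 0 < m) (hdvd : m ∣ M) (N : ℕ → ℚ) :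
    ∑ α ∈ Finset.range m, N α * (((-(α : ℤ) - ((1 + M : ℕ) : ℤ)) % (m : ℤ) : ℤ) : ℚ) / m
      + ∑ α ∈ Finset.Ico 1 m, (α : ℚ) * N α / m
      = (∑ α ∈ Finset.range m, N α) * (1 - 1 / m) := by
  have hmQ : (m : ℚ) ≠ 0 := by exact_mod_cast hm.ne'
  rw [Finset.sum_Ico_one_eq_sum_range (by simp), ← Finset.sum_add_distrib, Finset.sum_mul]
  refine Finset.sum_congr rfl fun α hα => ?_
  have hαm : α < m := Finset.mem_range.mp hα
  rw [Nat.cast_add, Nat.cast_one,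
    Int.emod_neg_sub_one_add_of_dvd (by positivity) (by omega) (Int.natCast_dvd_natCast.mpr hdvd)]
  push_cast
  field_simp
  ring

theorem chevalleyWeil_periodicity_degree_one_general
    (M : ℕ) (hM : 1 ≤ M)
    (g g' : ℤ) (D : ℕ) (r : ℕ)
    (m : Fin r → ℕ) (hdvd : ∀ i, m i ∣ M)
    (N : Fin r → ℕ → ℕ)
    (F : ℕ → ℚ)
    (hF : ∀ k : ℕ, F k =
      (2 * (k : ℚ) / (M : ℚ)) * (D : ℚ) * ((g : ℚ) - 1)
        - (D : ℚ) * ((g' : ℚ) - 1)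
        - ∑ i : Fin r, ∑ α ∈ Finset.range (m i),
            (N i α : ℚ) * ((((-(α : ℤ) - (k : ℤ)) % (m i : ℤ)) : ℤ) : ℚ) / (m i : ℚ))
    (hN : ∀ i : Fin r, ∑ α ∈ Finset.range (m i), N i α = D)
    (hRH : 2 * ((g : ℚ) - 1) / (M : ℚ) =
      2 * ((g' : ℚ) - 1) + ∑ i : Fin r, (1 - 1 / (m i : ℚ)))
    (σ : ℚ)
    (F₁ : ℚ)
    (hF₁ : F₁ = (D : ℚ) * ((g' : ℚ) - 1)
        + ∑ i : Fin r, ∑ α ∈ Finset.Ico 1 (m i),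
            (α : ℚ) * (N i α : ℚ) / (m i : ℚ)
        + σ) :
    F (1 + M) - F₁ = 2 * (D : ℚ) * ((g : ℚ) - 1) - σ := by
  have hMQ : (M : ℚ) ≠ 0 := by positivity
  have hfibres : ∑ i : Fin r, ∑ α ∈ Finset.range (m i),
        (N i α : ℚ) * ((((-(α : ℤ) - ((1 + M : ℕ) : ℤ)) % (m i : ℤ)) : ℤ) : ℚ) / (m i : ℚ)
      + ∑ i : Fin r, ∑ α ∈ Finset.Ico 1 (m i), (α : ℚ) * (N i α : ℚ) / (m i : ℚ)
      = D * ∑ i : Fin r, (1 - 1 / (m i : ℚ)) := by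
    rw [← Finset.sum_add_distrib, Finset.mul_sum]
    refine Finset.sum_congr rfl fun i _ => ?_
    rw [sum_residue_add_sum_weighted_eq (Nat.pos_of_dvd_of_pos (hdvd i) hM) (hdvd i),
      ← Nat.cast_sum, hN i]
  have hdegree : 2 * ((1 + M : ℕ) : ℚ) / M = 2 + 2 / M := by
    push_cast
    field_simp
    ring
  rw [hF, hF₁, hdegree]
  linear_combination (D : ℚ) * hRH - hfibres

/-- (Corollary 5.5, k = 1 part, of "G-marked moduli spaces".)
With the Chevalley–Weil value `F` as before, assuming each eigenvalue-multiplicity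
family sums to `D` (`Σ_{α<mᵢ} N i α = D`), the Riemann–Hurwitz relation
`2(g−1)/M = 2(g'−1) + Σᵢ (1 − 1/mᵢ)`, and `σ ∈ {0,1}`, setting
`F₁ = D·(g'−1) + Σᵢ Σ_{α=1}^{mᵢ−1} α·N i α/mᵢ + σ`, one has
`F (1 + M) − F₁ = 2·D·(g−1) − σ`. -/
theorem chevalleyWeil_periodicity_degree_one
    (M : ℕ) (hM : 1 ≤ M)
    (g g' : ℤ) (D : ℕ) (r : ℕ)
    (m : Fin r → ℕ) (hm : ∀ i, 0 < m i) (hdvd : ∀ i, m i ∣ M)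
    (N : Fin r → ℕ → ℕ)
    (F : ℕ → ℚ)
    (hF : ∀ k : ℕ, F k =
      (2 * (k : ℚ) / (M : ℚ)) * (D : ℚ) * ((g : ℚ) - 1)
        - (D : ℚ) * ((g' : ℚ) - 1)
        - ∑ i : Fin r, ∑ α ∈ Finset.range (m i),
            (N i α : ℚ) * ((((-(α : ℤ) - (k : ℤ)) % (m i : ℤ)) : ℤ) : ℚ) / (m i : ℚ))
    (hN : ∀ i : Fin r, ∑ α ∈ Finset.range (m i), N i α = D)
    (hRH : 2 * ((g : ℚ) - 1) / (M : ℚ) =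
      2 * ((g' : ℚ) - 1) + ∑ i : Fin r, (1 - 1 / (m i : ℚ)))
    (σ : ℚ) (hσ : σ = 0 ∨ σ = 1)
    (F₁ : ℚ)
    (hF₁ : F₁ = (D : ℚ) * ((g' : ℚ) - 1)
        + ∑ i : Fin r, ∑ α ∈ Finset.Ico 1 (m i),
            (α : ℚ) * (N i α : ℚ) / (m i : ℚ)
        + σ) :
    F (1 + M) - F₁ = 2 * (D : ℚ) * ((g : ℚ) - 1) - σ :=
  chevalleyWeil_periodicity_degree_one_general M hM g g' D r m hdvd N F hF hN hRH σ F₁ hF₁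
end
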